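/- arXiv:0905.3772 — 5 statements merged into one kernel-verified Lean document; each statement's English description precedes it below -/
import Mathlib

section
/- Let G be a closed (vacuum) 4-valent 3D GFT graph, with V, L, F, B its numbers of vertices, lines, faces and bubbles, and let the 2D projection satisfy |v| = 4V, |l| = 3L, |f| = 2F, |b| = B, with the 2D projection being a disjoint union of closed orientable surfaces of genera g_b. Then V - L + F - B = -Σ_B g_B. -/
theorem Finset.sum_two_sub_two_mul {ι R : Type*} [Fintype ι] [CommRing R] (g : ι → R) :
    ∑ b : ι, (2 - 2 * g b) = 2 * ((Fintype.card ι : R) - ∑ b : ι, g b) := by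
  rw [Finset.sum_sub_distrib, ← Finset.mul_sum, Finset.sum_const, Finset.card_univ, nsmul_eq_mul]
  ring

/-- Let `G` be a closed (vacuum) 4-valent 3D GFT graph, with `V, L, F, B`
its numbers of vertices, lines, faces and bubbles (so `2V = L` since every 4-valent vertex
contributes 4 half-lines paired into lines).  Suppose its 2D projection satisfies
`|v| = 4V`, `|l| = 3L`, `|f| = 2F`, `|b| = B`, and is a disjoint union of closed orientable
surfaces indexed by `ι` of genera `g b`, so that `|v| - |l| + |f| = Σ_b (2 - 2 g_b)`.
Then `V - L + F - B = - Σ_B g_B`. -/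
theorem gft3_euler_identity
    {ι : Type*} [Fintype ι] (V L F B v l f : ℤ) (g : ι → ℤ)
    (hvalent : 2 * V = L)
    (hv : v = 4 * V) (hl : l = 3 * L) (hf : f = 2 * F)
    (hb : (Fintype.card ι : ℤ) = B)
    (hsurf : v - l + f = ∑ b : ι, (2 - 2 * g b)) :
    V - L + F - B = -∑ b : ι, g b := by
  rw [Finset.sum_two_sub_two_mul, hb, hv, hl, hf] at hsurf
  linarith
end

section
/- In any 2D type 1 graph, for every edge L shared by two faces with projections f and f', no two edges of the 1D intersection graph \bar{G}^f ∩ f' share a vertex (property P holds for 2D type 1 graphs). -/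
/-- A ribbon (fat) graph, encoded by its set of darts `D` together with the vertex
rotation permutation `σ` and the fixed-point-free edge involution `α`.  Vertices are the
orbits of `σ`, edges the orbits of `α`, and faces the orbits of `φ = σ ∘ α`. -/
structure Ribbon where
  D : Type
  [fin : Fintype D]
  [deq : DecidableEq D]
  σ : Equiv.Perm D
  α : Equiv.Perm D
  αfix : ∀ d, α d ≠ d
  αinv : ∀ d, α (α d) = d

namespace Ribbon

variable (G : Ribbon)

instance : Fintype G.D := G.fin
instance : DecidableEq G.D := G.deq

/-- The face permutation of the ribbon graph. -/
def φ : Equiv.Perm G.D := G.σ * G.α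

/-- Two darts lie on the same vertex. -/
def sameVertex : G.D → G.D → Prop := G.σ.SameCycle

/-- Two darts lie on the same face. -/
def sameFace : G.D → G.D → Prop := G.φ.SameCycle

/-- Two darts belong to the same edge. -/
def sameEdge (d e : G.D) : Prop := e = d ∨ e = G.α d

def vSetoid : Setoid G.D :=
  ⟨G.sameVertex, ⟨fun _ => Equiv.Perm.SameCycle.refl _ _,
    Equiv.Perm.SameCycle.symm, Equiv.Perm.SameCycle.trans⟩⟩

def fSetoid : Setoid G.D :=
  ⟨G.sameFace, ⟨fun _ => Equiv.Perm.SameCycle.refl _ _,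
    Equiv.Perm.SameCycle.symm, Equiv.Perm.SameCycle.trans⟩⟩

def eSetoid : Setoid G.D where
  r := G.sameEdge
  iseqv := by
    constructor
    · intro x; exact Or.inl rfl
    · intro x y h
      rcases h with h | h
      · exact Or.inl h.symm
      · subst h; exact Or.inr (G.αinv x).symm
    · intro x y z h1 h2
      rcases h1 with h1 | h1 <;> rcases h2 with h2 | h2
      · subst h1; exact Or.inl h2
      · subst h1; exact Or.inr h2
      · subst h1; subst h2; exact Or.inr rfl
      · subst h1; subst h2; rw [G.αinv]; exact Or.inl rfl

/-- Number of vertices. -/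
noncomputable def nV : ℕ := Nat.card (Quotient G.vSetoid)
/-- Number of edges. -/
noncomputable def nE : ℕ := Nat.card (Quotient G.eSetoid)
/-- Number of faces. -/
noncomputable def nF : ℕ := Nat.card (Quotient G.fSetoid)

/-- Euler characteristic `V - E + F` of the underlying closed orientable surface. -/
noncomputable def eulerChar : ℤ := (G.nV : ℤ) - G.nE + G.nF

/-- All vertices are trivalent. -/
def Trivalent : Prop := ∀ d, G.σ d ≠ d ∧ G.σ (G.σ d) ≠ d ∧ G.σ (G.σ (G.σ d)) = d

/-- The ribbon graph is connected. -/
def Connected : Prop :=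
  ∀ d e : G.D, Relation.ReflTransGen (fun a b => G.σ a = b ∨ G.α a = b) d e

/-- Planarity: genus zero, i.e. Euler characteristic `2`. -/
noncomputable def Planar : Prop := G.eulerChar = 2

/-- One-particle irreducibility (no bridges): any two darts can be joined by a path
avoiding any prescribed edge. -/
def OnePI : Prop :=
  ∀ d₀ a b : G.D,
    Relation.ReflTransGen (fun x y => G.σ x = y ∨ (G.α x = y ∧ ¬ G.sameEdge d₀ x)) a b

/-- The faces of the graph. -/
def Face := Quotient G.fSetoid

noncomputable instance : Fintype G.Face := by
  classical exact Quotient.fintype G.fSetoid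

/-- The face on which the dart `d` lies. -/
def faceOf (d : G.D) : G.Face := Quotient.mk G.fSetoid d

/-- The edge of the dart `d` borders the face `f` (with one of its two sides). -/
def borders (d : G.D) (f : G.Face) : Prop := G.faceOf d = f ∨ G.faceOf (G.α d) = f

/-- First type 1 condition: every 2D vertex/edge of the ancestor of a face projects to a
unique 1D vertex/edge of that face.  Equivalently: the faces around every vertex are
pairwise distinct, and each edge appears at most once on any given face boundary. -/
def TypeOneI : Prop :=
  (∀ d e, G.sameVertex d e → G.sameFace d e → d = e) ∧ ∀ d, ¬ G.sameFace d (G.α d)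

/-- The 1D intersection of (the cycle of) a face `f` with the union of the ancestor
graphs of the faces in `J`: the darts of `f` whose edge borders some face of `J`. -/
def interSet (f : G.Face) (J : Set G.Face) : Set G.D :=
  {x | G.faceOf x = f ∧ ∃ j ∈ J, G.borders x j}

/-- A subset of a face cycle is connected (an arc): any two of its members are joined by
steps of the face permutation staying inside the subset. -/
def ArcConnected (S : Set G.D) : Prop :=
  ∀ x ∈ S, ∀ y ∈ S,
    Relation.ReflTransGen (fun a b => (G.φ a = b ∨ G.φ b = a) ∧ a ∈ S ∧ b ∈ S) x y

/-- Second type 1 condition: for every face `f₁` there is a total ordering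
`f₁ < f₂ < … < f_n` of all faces such that the intersection of each `f_i` with the union
of the ancestors of the previous faces is nonempty and connected, and `f_i` is not
contained in that union (except possibly the last face). -/
def TypeOneII : Prop :=
  ∀ f₁ : G.Face, ∃ (n : ℕ) (ord : Fin n ≃ G.Face),
    (∀ h : 0 < n, ord ⟨0, h⟩ = f₁) ∧
    ∀ i : Fin n, 0 < i.1 →
      (G.interSet (ord i) {g | ∃ j, j < i ∧ ord j = g}).Nonempty ∧
      G.ArcConnected (G.interSet (ord i) {g | ∃ j, j < i ∧ ord j = g}) ∧
      (i.1 + 1 < n →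
        ∃ x, G.faceOf x = ord i ∧ x ∉ G.interSet (ord i) {g | ∃ j, j < i ∧ ord j = g})

/-- A 2D GFT graph is of type 1. -/
def TypeOne : Prop := G.TypeOneI ∧ G.TypeOneII

end Ribbon

/-! A trivalent vertex carries three edges, and the edge of the dart `x` borders
exactly the faces of `x` and of `σ x` (because `φ (α x) = σ x`).  Two distinct edges at a
vertex therefore border the face pairs `{F x, F (σ x)}` and `{F (σ x), F (σ² x)}`, and the first
type 1 condition makes the three faces around the vertex pairwise distinct, so these pairs
cannot both equal `{f, f'}`. -/

namespace Ribbon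

variable (G : Ribbon)

lemma faceOf_eq_iff {a b : G.D} : G.faceOf a = G.faceOf b ↔ G.sameFace a b :=
  Quotient.eq

lemma faceOf_α (d : G.D) : G.faceOf (G.α d) = G.faceOf (G.σ d) :=
  G.faceOf_eq_iff.2 ⟨1, by simp [φ, G.αinv]⟩

lemma borders_iff {d : G.D} {f : G.Face} :
    G.borders d f ↔ G.faceOf d = f ∨ G.faceOf (G.σ d) = f := by
  rw [borders, faceOf_α]

variable {G}

lemma borders_of_sameEdge {d x : G.D} (h : G.sameEdge d x) {f : G.Face}
    (hb : G.borders d f) : G.borders x f := by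
  rcases h with rfl | rfl
  · exact hb
  · rcases hb with hb | hb
    · exact Or.inr (by rwa [G.αinv])
    · exact Or.inl hb

lemma sameVertex_sigma (x : G.D) : G.sameVertex x (G.σ x) :=
  Equiv.Perm.sameCycle_apply_right.2 (Equiv.Perm.SameCycle.refl _ _)

lemma Trivalent.sigma_pow_three (htri : G.Trivalent) : G.σ ^ 3 = 1 := by
  ext d
  simpa [pow_succ] using (htri d).2.2

lemma Trivalent.eq_sigma_or_eq_sigma_of_sameVertex (htri : G.Trivalent) {x y : G.D}
    (h : G.sameVertex x y) (hxy : x ≠ y) : y = G.σ x ∨ x = G.σ y := by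
  have hord : orderOf G.σ ≤ 3 := orderOf_le_of_pow_eq_one (by norm_num) htri.sigma_pow_three
  obtain ⟨i, hi, rfl⟩ := Equiv.Perm.SameCycle.exists_pow_eq' h
  have hi3 : i < 3 := hi.trans_le hord
  interval_cases i
  · exact absurd rfl hxy
  · simp
  · simp [pow_succ, (htri x).2.2]

lemma TypeOneI.faceOf_ne (hI : G.TypeOneI) {a b : G.D} (hv : G.sameVertex a b)
    (hab : a ≠ b) : G.faceOf a ≠ G.faceOf b := fun h =>
  hab (hI.1 a b hv (G.faceOf_eq_iff.1 h))

lemma TypeOneI.not_borders_both_of_sigma (htri : G.Trivalent) (hI : G.TypeOneI) {x : G.D}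
    {f f' : G.Face} (hff : f ≠ f') (hxf : G.borders x f) (hxf' : G.borders x f')
    (hyf : G.borders (G.σ x) f) (hyf' : G.borders (G.σ x) f') : False := by
  have h01 := hI.faceOf_ne (sameVertex_sigma x) (htri x).1.symm
  have h12 := hI.faceOf_ne (sameVertex_sigma (G.σ x)) (htri (G.σ x)).1.symm
  have h02 := hI.faceOf_ne ((sameVertex_sigma x).trans (sameVertex_sigma (G.σ x)))
    (htri x).2.1.symm
  rw [borders_iff] at hxf hxf' hyf hyf'
  grind

end Ribbon

/-- In any 2D type 1 graph (trivalent fat graph satisfying the type 1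
conditions), property `P` holds: for any two distinct faces `f`, `f'`, no two distinct
edges that both border `f` and `f'` (i.e. belong to the 1D intersection `\bar{G}^f ∩ f'`)
share a vertex. -/
theorem twoD_type1_propertyP (G : Ribbon) (htri : G.Trivalent) (h1 : G.TypeOne)
    (d e : G.D) (hde : ¬ G.sameEdge d e) (f f' : G.Face) (hff : f ≠ f')
    (hdf : G.borders d f) (hdf' : G.borders d f')
    (hef : G.borders e f) (hef' : G.borders e f') :
    ¬ ∃ x y : G.D, G.sameEdge d x ∧ G.sameEdge e y ∧ G.sameVertex x y := by
  rintro ⟨x, y, hdx, hey, hxy⟩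
  have hne : x ≠ y := by
    rintro rfl
    exact hde (G.eSetoid.iseqv.trans hdx (G.eSetoid.iseqv.symm hey))
  have hx : ∀ {g}, G.borders d g → G.borders x g := Ribbon.borders_of_sameEdge hdx
  have hy : ∀ {g}, G.borders e g → G.borders y g := Ribbon.borders_of_sameEdge hey
  rcases htri.eq_sigma_or_eq_sigma_of_sameVertex hxy hne with rfl | rfl
  · exact h1.1.not_borders_both_of_sigma htri hff (hx hdf) (hx hdf') (hy hef) (hy hef')
  · exact h1.1.not_borders_both_of_sigma htri hff (hy hef) (hy hef') (hx hdf) (hx hdf')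
end

section
/- If a 2D GFT graph is type 1 then it is one-particle irreducible: the existence of a bridge (cut-edge) L would force the face broken by L to contain two distinct 1D descendents of the same 2D vertex, violating the uniqueness condition. -/
/-!
Removing the edge `{d₀, α d₀}` only forbids crossing it. A crossing `x ↦ α x` can be
rerouted around the face of `α x`: one vertex step takes `x` to `σ x = φ (α x)`, and the face
cycle then leads from `φ (α x)` back to `α x`. Every edge crossed on the way is the edge of a
dart of that face other than `α x`, and it is never the removed edge, because the first type 1
condition forbids `x` and `α x` to lie on the same face.
-/

namespace Equiv.Perm

open Relation

theorem reflTransGen_apply_self {α : Type*} [Finite α] {r : α → α → Prop} (p : Perm α) (c : α)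
    (h : ∀ y, p.SameCycle c y → y ≠ c → ReflTransGen r y (p y)) :
    ReflTransGen r (p c) c := by
  have walk : ∀ n : ℕ, ReflTransGen r (p c) c ∨ ReflTransGen r (p c) ((p ^ (n + 1)) c) := by
    intro n
    induction n with
    | zero => exact .inr (by simpa using .refl)
    | succ n ih =>
      rcases ih with done | hn
      · exact .inl done
      by_cases hc : (p ^ (n + 1)) c = c
      · exact .inl (by rwa [hc] at hn)
      · refine .inr ?_
        rw [pow_succ', mul_apply]
        exact hn.trans (h _ ⟨(n + 1 : ℕ), by rw [zpow_natCast]⟩ hc)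
  obtain ⟨n, hn⟩ := (sameCycle_apply_left.2 (SameCycle.refl p c)).exists_nat_pow_eq
  rw [← mul_apply, ← pow_succ] at hn
  exact (walk n).elim id fun h => by rwa [hn] at h

end Equiv.Perm

namespace Ribbon

open Relation

variable (G : Ribbon)

def AdjAvoiding (d₀ x y : G.D) : Prop :=
  G.σ x = y ∨ (G.α x = y ∧ ¬ G.sameEdge d₀ x)

variable {G}

theorem onePI_iff : G.OnePI ↔ ∀ d₀ a b, ReflTransGen (G.AdjAvoiding d₀) a b :=
  Iff.rfl

theorem reflTransGen_adjAvoiding_phi {d₀ y : G.D} (hy : ¬ G.sameEdge d₀ y) :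
    ReflTransGen (G.AdjAvoiding d₀) y (G.φ y) :=
  .tail (.single (.inr ⟨rfl, hy⟩)) (.inl rfl)

theorem eq_or_eq_alpha_of_sameEdge {d₀ x y : G.D} (hx : G.sameEdge d₀ x)
    (hy : G.sameEdge d₀ y) : y = x ∨ y = G.α x := by
  rcases hx with rfl | rfl <;> rcases hy with rfl | rfl <;> simp [G.αinv]

theorem reflTransGen_adjAvoiding_alpha {d₀ x : G.D} (hx : G.sameEdge d₀ x)
    (hface : ¬ G.sameFace x (G.α x)) :
    ReflTransGen (G.AdjAvoiding d₀) x (G.α x) := by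
  have hφ : G.φ (G.α x) = G.σ x := by simp [φ, G.αinv]
  refine .head (Or.inl hφ.symm) (G.φ.reflTransGen_apply_self _ fun y hy hne => ?_)
  refine reflTransGen_adjAvoiding_phi fun hy₀ => ?_
  rcases eq_or_eq_alpha_of_sameEdge hx hy₀ with rfl | rfl
  · exact hface hy.symm
  · exact hne rfl

theorem reflTransGen_adjAvoiding_of_adj (d₀ : G.D) (hface : ∀ d, ¬ G.sameFace d (G.α d))
    {x y : G.D} (hxy : G.σ x = y ∨ G.α x = y) :
    ReflTransGen (G.AdjAvoiding d₀) x y := by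
  rcases hxy with hσ | rfl
  · exact .single (.inl hσ)
  by_cases hx : G.sameEdge d₀ x
  · exact reflTransGen_adjAvoiding_alpha hx (hface x)
  · exact .single (.inr ⟨rfl, hx⟩)

end Ribbon

theorem twoD_type1_implies_onePI_general (G : Ribbon)
    (hconn : G.Connected) (h1 : G.TypeOne) :
    G.OnePI :=
  Ribbon.onePI_iff.2 fun d₀ a b =>
    Relation.ReflTransGen.lift' id
      (fun _ _ => Ribbon.reflTransGen_adjAvoiding_of_adj d₀ h1.1.2) a b (hconn a b)

/-- If a (connected, trivalent) 2D GFT graph is type 1 then it is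
one-particle irreducible: a bridge (cut-edge) would force the face broken by it to contain
two distinct 1D descendents of the same 2D vertex, violating the uniqueness condition. -/
theorem twoD_type1_implies_onePI (G : Ribbon)
    (htri : G.Trivalent) (hconn : G.Connected) (h1 : G.TypeOne) :
    G.OnePI :=
  twoD_type1_implies_onePI_general G hconn h1
end

section
/- In a planar trivalent fat graph in which every edge separates two distinct faces, for every face F₁ there exists a face F₂ such that F₁ and F₂ share exactly one edge. -/
open Equiv Function

namespace Setoid

variable {α : Type*}

def pair (a b : α) : Setoid α := Relation.EqvGen.setoid fun x y => x = a ∧ y = b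

theorem pair_rel (a b : α) : pair a b a b := Relation.EqvGen.rel _ _ ⟨rfl, rfl⟩

theorem pair_le {s : Setoid α} {a b : α} (h : s a b) : pair a b ≤ s :=
  eqvGen_le fun _ _ hxy => hxy.1 ▸ hxy.2 ▸ h

theorem rel_swap_apply [DecidableEq α] {s : Setoid α} {a b : α} (h : s a b) (x : α) :
    s x (swap a b x) := by
  rcases eq_or_ne x a with rfl | hxa
  · simpa using h
  rcases eq_or_ne x b with rfl | hxb
  · simpa using s.symm h
  · rw [swap_apply_of_ne_of_ne hxa hxb]

variable [Finite α]

theorem card_quotient_le_of_le {s t : Setoid α} (h : s ≤ t) :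
    Nat.card (Quotient t) ≤ Nat.card (Quotient s) :=
  Nat.card_le_card_of_surjective (Quotient.map' id h) fun q =>
    Quotient.inductionOn q fun x => ⟨⟦x⟧, rfl⟩

theorem card_quotient_lt_of_lt {s t : Setoid α} (h : s < t) :
    Nat.card (Quotient t) < Nat.card (Quotient s) := by
  have := Fintype.ofFinite α
  obtain ⟨x, y, hxy, hnxy⟩ : ∃ x y, t x y ∧ ¬ s x y := by
    by_contra! H
    exact h.not_ge fun x y => H x y
  classical
  simp only [Nat.card_eq_fintype_card]
  refine Fintype.card_lt_of_surjective_not_injective (Quotient.map' id h.le)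
    (fun q => Quotient.inductionOn q fun x => ⟨⟦x⟧, rfl⟩) fun hinj => hnxy ?_
  exact Quotient.exact (hinj (Quotient.sound hxy : (⟦x⟧ : Quotient t) = ⟦y⟧))

theorem card_quotient_le_card_quotient_sup_pair_add_one (s : Setoid α) (a b : α) :
    Nat.card (Quotient s) ≤ Nat.card (Quotient (s ⊔ pair a b)) + 1 := by
  classical
  let F : α → Quotient s := fun x => if s x b then ⟦a⟧ else ⟦x⟧
  have hF : s ⊔ pair a b ≤ ker F := by
    refine sup_le (fun x y hxy => ?_) (eqvGen_le ?_)
    · have hb : s x b ↔ s y b := ⟨s.trans (s.symm hxy), s.trans hxy⟩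
      by_cases hx : s x b
      · simp [F, hx, hb.mp hx, ker_def]
      · simp [F, hx, mt hb.mpr hx, ker_def, Quotient.sound hxy]
    · rintro x y ⟨rfl, rfl⟩
      simp [F, ker_def]
  refine (Nat.card_le_card_of_surjective
    (fun o : Option (Quotient (s ⊔ pair a b)) => o.elim ⟦b⟧ (Quotient.lift F hF)) ?_).trans
    Finite.card_option.le
  rintro ⟨x⟩
  by_cases hx : s x b
  · exact ⟨none, Quotient.sound (s.symm hx)⟩
  · exact ⟨some ⟦x⟧, if_neg hx⟩

end Setoid

namespace Equiv.Perm

variable {α : Type*}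

noncomputable def cycleCount (π : Perm α) : ℕ := Nat.card (Quotient (SameCycle.setoid π))

theorem cycleCount_conj (π σ : Perm α) : cycleCount (σ * π * σ⁻¹) = cycleCount π :=
  Nat.card_congr <| Quotient.congr σ⁻¹ fun _ _ => sameCycle_conj

theorem pow_apply_eq_pow_apply_of_forall_lt {π π' : Perm α} {x : α} {n : ℕ}
    (h : ∀ l < n, π' ((π ^ l) x) = π ((π ^ l) x)) : (π' ^ n) x = (π ^ n) x := by
  induction n with
  | zero => rfl
  | succ n ih =>
    rw [pow_succ', mul_apply, ih fun l hl => h l (by omega), h n n.lt_succ_self, pow_succ',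
      mul_apply]

theorem sameCycle_pow_apply_of_forall_lt {π π' : Perm α} {S : Set α}
    (hS : ∀ z ∉ S, π' z = π z) {x : α} {n : ℕ} (harc : ∀ l < n, (π ^ l) x ∉ S) :
    π'.SameCycle x ((π ^ n) x) := by
  rw [← pow_apply_eq_pow_apply_of_forall_lt fun l hl => hS _ (harc l hl)]
  exact sameCycle_pow_right.2 (SameCycle.refl _ _)

theorem sameCycle_pow_apply_pow_apply_of_forall {π π' : Perm α} {S : Set α}
    (hS : ∀ z ∉ S, π' z = π z) {x : α} {a b : ℕ} (hab : a ≤ b)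
    (harc : ∀ l, a ≤ l → l < b → (π ^ l) x ∉ S) :
    π'.SameCycle ((π ^ a) x) ((π ^ b) x) := by
  have hshift : ∀ l, (π ^ l) ((π ^ a) x) = (π ^ (l + a)) x := fun l => by
    rw [pow_add, mul_apply]
  have := sameCycle_pow_apply_of_forall_lt hS (n := b - a) fun l hl => by
    rw [hshift]; exact harc _ (by omega) (by omega)
  rwa [hshift, Nat.sub_add_cancel hab] at this

theorem pow_apply_ne_pow_apply {π : Perm α} {x : α} {l m : ℕ} (hl : l < minimalPeriod π x)
    (hm : m < minimalPeriod π x) (hlm : l ≠ m) : (π ^ l) x ≠ (π ^ m) x := by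
  rw [coe_pow, coe_pow]
  exact mt (iterate_eq_iterate_iff_of_lt_minimalPeriod hl hm).1 hlm

def orbitSetoid (g h : Perm α) : Setoid α := Relation.EqvGen.setoid fun x y => g x = y ∨ h x = y

noncomputable def orbitCount (g h : Perm α) : ℕ := Nat.card (Quotient (orbitSetoid g h))

theorem orbitSetoid_le {g h : Perm α} {s : Setoid α} (hg : ∀ x, s x (g x))
    (hh : ∀ x, s x (h x)) : orbitSetoid g h ≤ s :=
  Setoid.eqvGen_le <| by rintro x _ (rfl | rfl); exacts [hg x, hh x]

theorem orbitSetoid_apply_left (g h : Perm α) (x : α) : orbitSetoid g h x (g x) :=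
  Relation.EqvGen.rel _ _ (Or.inl rfl)

theorem orbitSetoid_apply_right (g h : Perm α) (x : α) : orbitSetoid g h x (h x) :=
  Relation.EqvGen.rel _ _ (Or.inr rfl)

theorem orbitSetoid_le_sup_mul_swap [DecidableEq α] (g h : Perm α) (a b : α) :
    orbitSetoid g h ≤ orbitSetoid (g * swap a b) (swap a b * h) ⊔ Setoid.pair a b := by
  set R := orbitSetoid (g * swap a b) (swap a b * h) ⊔ Setoid.pair a b
  have hswap : ∀ x, R x (swap a b x) :=
    Setoid.rel_swap_apply (le_sup_right (a := orbitSetoid _ _) (Setoid.pair_rel a b))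
  refine orbitSetoid_le (fun x => R.trans' (hswap x) (le_sup_left (b := Setoid.pair a b) ?_))
    fun x => R.trans' (le_sup_left (b := Setoid.pair a b) (orbitSetoid_apply_right _ _ x)) ?_
  · simpa using orbitSetoid_apply_left (g * swap a b) (swap a b * h) (swap a b x)
  · simpa using hswap ((swap a b * h) x)

theorem orbitSetoid_le_conj_swap [DecidableEq α] {g h : Perm α} {a b : α}
    (hab : orbitSetoid g (swap a b * h * swap a b) a b) :
    orbitSetoid g h ≤ orbitSetoid g (swap a b * h * swap a b) := by
  set R := orbitSetoid g (swap a b * h * swap a b)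
  have hswap : ∀ x, R x (swap a b x) := Setoid.rel_swap_apply hab
  refine orbitSetoid_le (orbitSetoid_apply_left _ _) fun x =>
    R.trans' (hswap x) (R.trans' (orbitSetoid_apply_right _ _ (swap a b x)) ?_)
  simpa using hswap ((swap a b * h * swap a b) (swap a b x))

variable [Finite α]

theorem sameCycle_setoid_le {π : Perm α} {s : Setoid α} (h : ∀ x, s x (π x)) :
    SameCycle.setoid π ≤ s := by
  rintro x y hxy
  obtain ⟨n, rfl⟩ := hxy.exists_nat_pow_eq
  clear hxy
  induction n with
  | zero => exact s.refl x
  | succ n ih => rw [pow_succ', mul_apply]; exact s.trans ih (h _)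

theorem not_sameCycle_of_pow_apply_eq_self {π : Perm α} {a b : α} {n : ℕ} (hn : 0 < n)
    (ha : (π ^ n) a = a) (hb : ∀ l < n, (π ^ l) a ≠ b) : ¬π.SameCycle a b := by
  rintro hab
  obtain ⟨m, rfl⟩ := hab.exists_nat_pow_eq
  refine hb (m % n) (Nat.mod_lt m hn) ?_
  have hper : IsPeriodicPt π n a := by rwa [IsPeriodicPt, IsFixedPt, ← coe_pow]
  simp only [coe_pow, hper.iterate_mod_apply]

theorem sameCycle_setoid_le_orbitSetoid (g h : Perm α) : SameCycle.setoid g ≤ orbitSetoid g h :=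
  sameCycle_setoid_le (orbitSetoid_apply_left g h)

theorem sameCycle_setoid_mul_le_orbitSetoid (g h : Perm α) :
    SameCycle.setoid (g * h) ≤ orbitSetoid g h :=
  sameCycle_setoid_le fun x =>
    (orbitSetoid g h).trans' (orbitSetoid_apply_right g h x) (orbitSetoid_apply_left g h (h x))

variable [DecidableEq α]

theorem sameCycle_mul_swap_iff {π : Perm α} {a b : α} (hab : a ≠ b) :
    (π * swap a b).SameCycle a b ↔ ¬π.SameCycle a b := by
  set γ := π * swap a b
  -- `n` is the first time the `π`-orbit of `a` returns to `{a, b}`.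
  have hex : ∃ n, 0 < n ∧ ((π ^ n) a = a ∨ (π ^ n) a = b) :=
    ⟨orderOf π, orderOf_pos π, Or.inl (by rw [pow_orderOf_eq_one, one_apply])⟩
  set n := Nat.find hex
  obtain ⟨hn, hret⟩ := Nat.find_spec hex
  have hmin : ∀ l, 0 < l → l < n → (π ^ l) a ≠ a ∧ (π ^ l) a ≠ b := fun l hl hln => by
    simpa [not_or] using fun h => Nat.find_min hex hln ⟨hl, h⟩
  -- Starting at `b`, the permutation `γ` follows the `π`-orbit of `a` until that return.
  have harc : ∀ l < n, (γ ^ (l + 1)) b = (π ^ (l + 1)) a := fun l hl => by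
    have hγb : γ b = π a := by simp [γ]
    rw [pow_succ, mul_apply, hγb, pow_apply_eq_pow_apply_of_forall_lt fun i hi => ?_,
      ← mul_apply, ← pow_succ]
    rw [← mul_apply (π ^ i), ← pow_succ]
    obtain ⟨h1, h2⟩ := hmin (i + 1) (by omega) (by omega)
    simp [γ, swap_apply_of_ne_of_ne h1 h2]
  have hγn : (γ ^ n) b = (π ^ n) a := by
    obtain ⟨m, hm⟩ : ∃ m, n = m + 1 := ⟨n - 1, by omega⟩
    rw [hm]; exact harc m (by omega)
  rcases hret with hret | hret
  · refine iff_of_true ((hγn.trans hret) ▸ sameCycle_pow_right.2 (SameCycle.refl _ _)).symm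
      (not_sameCycle_of_pow_apply_eq_self hn hret fun l hl => ?_)
    rcases Nat.eq_zero_or_pos l with rfl | hl0
    · exact hab
    · exact (hmin l hl0 hl).2
  · refine iff_of_false (fun h => not_sameCycle_of_pow_apply_eq_self hn (hγn.trans hret)
      (fun l hl => ?_) h.symm) (not_not.2 (hret ▸ sameCycle_pow_right.2 (SameCycle.refl _ _)))
    rcases Nat.eq_zero_or_pos l with rfl | hl0
    · exact hab.symm
    · obtain ⟨m, rfl⟩ : ∃ m, l = m + 1 := ⟨l - 1, by omega⟩
      rw [harc m (by omega)]; exact (hmin _ hl0 hl).1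

theorem sameCycle_setoid_le_sup_mul_swap (π : Perm α) (a b : α) :
    SameCycle.setoid π ≤ SameCycle.setoid (π * swap a b) ⊔ Setoid.pair a b :=
  sameCycle_setoid_le fun x => by
    refine Setoid.trans' _ (le_sup_right (a := SameCycle.setoid (π * swap a b))
      (Setoid.rel_swap_apply (Setoid.pair_rel a b) x)) (le_sup_left (b := Setoid.pair a b) ?_)
    show (π * swap a b).SameCycle _ _
    simpa using sameCycle_apply_right.2 (SameCycle.refl (π * swap a b) (swap a b x))

theorem cycleCount_mul_swap_le (π : Perm α) (a b : α) :
    cycleCount (π * swap a b) ≤ cycleCount π + 1 :=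
  (Setoid.card_quotient_le_card_quotient_sup_pair_add_one _ a b).trans <|
    Nat.add_le_add_right (Setoid.card_quotient_le_of_le (sameCycle_setoid_le_sup_mul_swap π a b)) 1

theorem cycleCount_le_mul_swap (π : Perm α) (a b : α) :
    cycleCount π ≤ cycleCount (π * swap a b) + 1 := by
  simpa using cycleCount_mul_swap_le (π * swap a b) a b

theorem cycleCount_add_one_le_mul_swap {π : Perm α} {a b : α} (hab : a ≠ b)
    (h : π.SameCycle a b) : cycleCount π + 1 ≤ cycleCount (π * swap a b) := by
  have hle : SameCycle.setoid (π * swap a b) ≤ SameCycle.setoid π := by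
    simpa [sup_eq_left.2 (Setoid.pair_le (s := SameCycle.setoid π) h)] using
      sameCycle_setoid_le_sup_mul_swap (π * swap a b) a b
  exact Setoid.card_quotient_lt_of_lt
    (hle.lt_of_not_ge fun hge => (sameCycle_mul_swap_iff hab).1 (hge h) h)

theorem cycleCount_add_two_le_mul_swap_mul_swap {π : Perm α} {a b c d : α} (hab : a ≠ b)
    (hcd : c ≠ d) (h₁ : π.SameCycle a b) (h₂ : π.SameCycle c d) (hac : ¬π.SameCycle a c) :
    cycleCount π + 2 ≤ cycleCount (π * swap a b * swap c d) := by
  have h₂' : (π * swap a b).SameCycle c d := by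
    obtain ⟨n, rfl⟩ := h₂.exists_nat_pow_eq
    refine sameCycle_pow_apply_of_forall_lt (S := {a, b}) (fun z hz => ?_) fun l _ hl => ?_
    · simp only [Set.mem_insert_iff, Set.mem_singleton_iff, not_or] at hz
      simp [swap_apply_of_ne_of_ne hz.1 hz.2]
    · rcases hl with rfl | rfl
      · exact hac (sameCycle_pow_right.2 (SameCycle.refl _ _)).symm
      · exact hac (h₁.trans (sameCycle_pow_right.2 (SameCycle.refl _ _)).symm)
  have := cycleCount_add_one_le_mul_swap hab h₁
  have := cycleCount_add_one_le_mul_swap hcd h₂'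
  omega

/-- Euler's inequality `V + E + F ≤ #darts + 2 · #components` for the map with vertex
permutation `g`, edge permutation `h` and face permutation `g * h`. -/
theorem cycleCount_add_cycleCount_add_cycleCount_mul_le [Fintype α] (g h : Perm α) :
    cycleCount g + cycleCount h + cycleCount (g * h) ≤ Fintype.card α + 2 * orbitCount g h := by
  obtain ⟨n, hn⟩ : ∃ n, h.support.card = n := ⟨_, rfl⟩
  induction n using Nat.strong_induction_on generalizing g h with
  | _ n ih =>
  obtain rfl | ⟨a, ha⟩ : h = 1 ∨ ∃ a, h a ≠ a := by
    by_contra! H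
    exact H.1 (Equiv.ext H.2)
  · have h1 : cycleCount (1 : Perm α) ≤ Fintype.card α :=
      (Nat.card_le_card_of_surjective _ Quotient.mk_surjective).trans_eq Nat.card_eq_fintype_card
    have hg : cycleCount g ≤ orbitCount g 1 := Setoid.card_quotient_le_of_le <| orbitSetoid_le
      (fun x => sameCycle_apply_right.2 (SameCycle.refl g x)) fun x => SameCycle.refl g x
    rw [mul_one]
    omega
  set b := h a
  have hab : a ≠ b := Ne.symm ha
  have IH := ih _ (hn ▸ card_support_swap_mul ha) (g * swap a b) (swap a b * h) rfl
  rw [show g * swap a b * (swap a b * h) = g * h by simp [mul_assoc]] at IH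
  have hh : cycleCount h + 1 ≤ cycleCount (swap a b * h) := by
    rw [show swap a b * h = swap a b * (h * swap a b) * (swap a b)⁻¹ by simp [mul_assoc],
      cycleCount_conj]
    exact cycleCount_add_one_le_mul_swap hab (sameCycle_apply_right.2 (SameCycle.refl h a))
  have horb : orbitCount (g * swap a b) (swap a b * h) ≤ orbitCount g h + 1 :=
    (Setoid.card_quotient_le_card_quotient_sup_pair_add_one _ a b).trans <|
      Nat.add_le_add_right (Setoid.card_quotient_le_of_le (orbitSetoid_le_sup_mul_swap g h a b)) 1
  by_cases hg : g.SameCycle a b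
  · have := cycleCount_add_one_le_mul_swap hab hg
    omega
  · have := cycleCount_le_mul_swap g a b
    have hjoin : Setoid.pair a b ≤ orbitSetoid (g * swap a b) (swap a b * h) :=
      Setoid.pair_le (sameCycle_setoid_le_orbitSetoid _ _ ((sameCycle_mul_swap_iff hab).2 hg))
    have : orbitCount (g * swap a b) (swap a b * h) ≤ orbitCount g h :=
      Setoid.card_quotient_le_of_le (sup_eq_left.2 hjoin ▸ orbitSetoid_le_sup_mul_swap g h a b)
    omega

end Equiv.Perm

theorem Function.Periodic.exists_interleaved {β : Type*} {ℓ : ℕ → β} {p : ℕ}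
    (hper : Periodic ℓ p) (hadj : ∀ n, ℓ (n + 1) ≠ ℓ n)
    (hrep : ∀ n, ∃ m, 0 < m ∧ m < p ∧ ℓ (n + m) = ℓ n) :
    ∃ a j k, 1 < j ∧ j < k ∧ k < p ∧ ℓ (a + j) = ℓ a ∧ ℓ (a + k) = ℓ (a + 1) := by
  -- Take a shortest gap `j` between two equal letters; the letter after its start recurs
  -- beyond its end.
  classical
  have hex : ∃ j a, 0 < j ∧ j < p ∧ ℓ (a + j) = ℓ a := (hrep 0).imp fun _ h => ⟨0, h⟩
  obtain ⟨a, hj0, hjp, hja⟩ := Nat.find_spec hex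
  have hj1 : 1 < Nat.find hex := by
    by_contra! h
    exact hadj a (by rwa [show Nat.find hex = 1 by omega] at hja)
  obtain ⟨m, hm0, hmp, hm⟩ := hrep (a + 1)
  have hjm : Nat.find hex < m + 1 := by
    by_contra! h
    exact Nat.find_min hex (show m < Nat.find hex by omega) ⟨a + 1, hm0, hmp, hm⟩
  have hmp' : m + 1 < p := by
    refine lt_of_le_of_ne hmp (fun h => hadj a ?_)
    rw [← hm, show a + 1 + m = a + p by omega, hper]
  exact ⟨a, _, m + 1, hj1, hjm, hmp', hja, by rw [← hm, add_assoc, add_comm 1]⟩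

namespace Ribbon

open Perm

variable (G : Ribbon)

theorem α_mul_self : G.α * G.α = 1 := Equiv.ext G.αinv

theorem faceOf_eq_faceOf_iff {x y : G.D} : G.faceOf x = G.faceOf y ↔ G.sameFace x y :=
  Quotient.eq

theorem faceOf_pow_apply (n : ℕ) (x : G.D) : G.faceOf ((G.φ ^ n) x) = G.faceOf x :=
  G.faceOf_eq_faceOf_iff.2 (sameCycle_pow_left.2 (SameCycle.refl _ _))

theorem faceOf_α_ne (hsep : ∀ d, ¬ G.sameFace d (G.α d)) (d : G.D) :
    G.faceOf (G.α d) ≠ G.faceOf d :=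
  fun h => hsep d (Quotient.exact h).symm

theorem not_sameFace_α_α_φ (htri : G.Trivalent) (hsep : ∀ d, ¬ G.sameFace d (G.α d))
    (d : G.D) : ¬ G.sameFace (G.α d) (G.α (G.φ d)) := by
  -- `α (σ x)` is followed by `σ² x` on its face and `α (σ² x)` by `σ³ x = x`; a face
  -- through `x` and `α (σ x)` would therefore contain both sides of the edge at `σ² x`.
  set x := G.α d
  have step : ∀ z, G.sameFace z (G.φ z) := fun z => sameCycle_apply_right.2 (SameCycle.refl _ z)
  have h₁ : G.sameFace (G.α (G.σ x)) (G.σ (G.σ x)) := by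
    simpa [φ, G.αinv] using step (G.α (G.σ x))
  have h₂ : G.sameFace (G.α (G.σ (G.σ x))) x := by
    simpa [φ, G.αinv, (htri x).2.2] using step (G.α (G.σ (G.σ x)))
  exact fun h => hsep _ (h₁.symm.trans (h.symm.trans h₂.symm))

theorem existsUnique_sharedEdge (hsep : ∀ d, ¬ G.sameFace d (G.α d)) {x : G.D}
    (hx : ∀ y, G.faceOf y = G.faceOf x → G.faceOf (G.α y) = G.faceOf (G.α x) → y = x) :
    ∃! e : Quotient G.eSetoid, ∃ d, Quotient.mk G.eSetoid d = e ∧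
      G.borders d (G.faceOf x) ∧ G.borders d (G.faceOf (G.α x)) := by
  refine ⟨Quotient.mk _ x, ⟨x, rfl, Or.inl rfl, Or.inr rfl⟩, ?_⟩
  rintro _ ⟨d, rfl, hd₁ | hd₁, hd₂ | hd₂⟩
  · exact absurd (hd₂.symm.trans hd₁) (G.faceOf_α_ne hsep x)
  · rw [hx d hd₁ hd₂]
  · exact Quotient.sound (Or.inr (hx (G.α d) hd₁ (by rwa [G.αinv])).symm)
  · exact absurd (hd₂.symm.trans hd₁) (G.faceOf_α_ne hsep x)

theorem nE_le_cycleCount_α : G.nE ≤ G.α.cycleCount :=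
  Setoid.card_quotient_le_of_le (sameCycle_setoid_le fun _ => Or.inr rfl)

theorem card_le_two_mul_nE : Fintype.card G.D ≤ 2 * G.nE := by
  classical
  calc Fintype.card G.D = (Finset.univ : Finset G.D).card := rfl
    _ ≤ 2 * (Finset.univ.image (Quotient.mk G.eSetoid)).card := by
      refine Finset.card_le_mul_card_image _ 2 fun e _ => ?_
      obtain ⟨x, rfl⟩ := Quotient.exists_rep e
      refine (Finset.card_le_card fun y hy => ?_).trans (Finset.card_le_two (a := x) (b := G.α x))
      obtain rfl | rfl := Quotient.exact (Finset.mem_filter.1 hy).2.symm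
      · exact Finset.mem_insert_self _ _
      · exact Finset.mem_insert_of_mem (Finset.mem_singleton_self _)
    _ ≤ 2 * G.nE := by
      rw [nE, Nat.card_eq_fintype_card]
      exact Nat.mul_le_mul_left 2 (Finset.card_le_univ _)

theorem orbitCount_le_one (hconn : G.Connected) : orbitCount G.σ G.α ≤ 1 := by
  refine Finite.card_le_one_iff_subsingleton.2
    ⟨fun p q => Quotient.inductionOn₂ p q fun x y => Quotient.sound ?_⟩
  induction hconn x y with
  | refl => exact Setoid.refl' _ x
  | tail _ hstep ih =>
    rcases hstep with rfl | rfl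
    exacts [Setoid.trans' _ ih (orbitSetoid_apply_left _ _ _),
      Setoid.trans' _ ih (orbitSetoid_apply_right _ _ _)]

theorem σ_mul_conj_swap (d e : G.D) :
    G.σ * (swap d e * G.α * swap d e) = G.φ * swap (G.α d) (G.α e) * swap d e := by
  have hinv : G.α⁻¹ = G.α := inv_eq_of_mul_eq_one_right G.α_mul_self
  rw [swap_apply_apply, hinv, φ]
  simp only [mul_assoc]
  rw [← mul_assoc G.α G.α, α_mul_self, one_mul]

theorem conj_swap_apply_of_notMem {d e z : G.D} (hz : z ∉ ({d, e, G.α d, G.α e} : Set G.D)) :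
    (swap d e * G.α * swap d e) z = G.α z := by
  simp only [Set.mem_insert_iff, Set.mem_singleton_iff, not_or] at hz
  have h₁ : G.α z ≠ d := fun h => hz.2.2.1 (by rw [← h, G.αinv])
  have h₂ : G.α z ≠ e := fun h => hz.2.2.2 (by rw [← h, G.αinv])
  simp [swap_apply_of_ne_of_ne hz.1 hz.2.1, swap_apply_of_ne_of_ne h₁ h₂]

theorem σ_mul_conj_swap_apply_of_notMem {d e z : G.D}
    (hz : z ∉ ({d, e, G.α d, G.α e} : Set G.D)) :
    (G.σ * (swap d e * G.α * swap d e)) z = G.φ z := by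
  simp only [Set.mem_insert_iff, Set.mem_singleton_iff, not_or] at hz
  rw [σ_mul_conj_swap]
  simp [swap_apply_of_ne_of_ne hz.1 hz.2.1, swap_apply_of_ne_of_ne hz.2.2.1 hz.2.2.2]

theorem exists_crossing (htri : G.Trivalent) (hsep : ∀ d, ¬ G.sameFace d (G.α d)) {f : G.Face}
    (hrep : ∀ x, G.faceOf x = f →
      ∃ y, G.faceOf y = f ∧ G.faceOf (G.α y) = G.faceOf (G.α x) ∧ y ≠ x) :
    ∃ d j k, 1 < j ∧ j < k ∧ k < minimalPeriod G.φ d ∧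
      G.sameFace (G.α d) (G.α ((G.φ ^ j) d)) ∧
      G.sameFace (G.α (G.φ d)) (G.α ((G.φ ^ k) d)) := by
  obtain ⟨d₀, rfl⟩ := Quotient.exists_rep f
  have hd₀ : d₀ ∈ periodicPts G.φ := G.φ.injective.mem_periodicPts d₀
  have hshift : ∀ m n, (G.φ ^ (m + n)) d₀ = (G.φ ^ n) ((G.φ ^ m) d₀) := fun m n => by
    rw [add_comm, pow_add, mul_apply]
  set p := minimalPeriod G.φ d₀
  set ℓ : ℕ → G.Face := fun n => G.faceOf (G.α ((G.φ ^ n) d₀))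
  have hper : Periodic ℓ p := fun n => by
    simp only [ℓ, p, coe_pow, iterate_add_minimalPeriod_eq]
  have hadj : ∀ n, ℓ (n + 1) ≠ ℓ n := fun n h => G.not_sameFace_α_α_φ htri hsep _
    (G.faceOf_eq_faceOf_iff.1 (by simpa only [ℓ, hshift, pow_one] using h.symm))
  have hrep' : ∀ n, ∃ m, 0 < m ∧ m < p ∧ ℓ (n + m) = ℓ n := fun n => by
    obtain ⟨y, hy, hyx, hne⟩ := hrep ((G.φ ^ n) d₀) (G.faceOf_pow_apply n d₀)
    obtain ⟨r, rfl⟩ := (G.faceOf_eq_faceOf_iff.1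
      ((G.faceOf_pow_apply n d₀).trans hy.symm)).exists_nat_pow_eq
    have hmod : (G.φ ^ (r % p)) ((G.φ ^ n) d₀) = (G.φ ^ r) ((G.φ ^ n) d₀) := by
      simp only [p, coe_pow, ← minimalPeriod_apply_iterate hd₀ n, iterate_mod_minimalPeriod_eq]
    refine ⟨r % p, Nat.pos_of_ne_zero fun h0 => hne ?_,
      Nat.mod_lt _ (minimalPeriod_pos_of_mem_periodicPts hd₀),
      by simp only [ℓ, hshift, hmod, hyx]⟩
    rw [← hmod, h0, pow_zero, one_apply]
  obtain ⟨a, j, k, hj, hjk, hk, hja, hka⟩ := hper.exists_interleaved hadj hrep'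
  refine ⟨(G.φ ^ a) d₀, j, k, hj, hjk, ?_, ?_, ?_⟩
  · rwa [coe_pow, minimalPeriod_apply_iterate hd₀]
  · exact G.faceOf_eq_faceOf_iff.1 (by simpa only [ℓ, hshift] using hja.symm)
  · exact G.faceOf_eq_faceOf_iff.1 (by simpa only [ℓ, hshift, pow_one] using hka.symm)

theorem orbitSetoid_rel_of_crossing (hsep : ∀ d, ¬ G.sameFace d (G.α d)) {d : G.D} {j k : ℕ}
    (hj : 1 < j) (hjk : j < k) (hk : k < minimalPeriod G.φ d)
    (hg : G.sameFace (G.α d) (G.α ((G.φ ^ j) d)))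
    (hh : G.sameFace (G.α (G.φ d)) (G.α ((G.φ ^ k) d)))
    (hgh : ¬ G.sameFace (G.α d) (G.α (G.φ d))) :
    orbitSetoid G.σ (swap d ((G.φ ^ j) d) * G.α * swap d ((G.φ ^ j) d)) d ((G.φ ^ j) d) := by
  set p := minimalPeriod G.φ d
  set d' := (G.φ ^ j) d
  set S : Set G.D := {d, d', G.α d, G.α d'}
  set R := orbitSetoid G.σ (swap d d' * G.α * swap d d')
  have hR : SameCycle.setoid (G.σ * (swap d d' * G.α * swap d d')) ≤ R :=
    sameCycle_setoid_mul_le_orbitSetoid _ _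
  have hφ' : ∀ z ∉ S, (G.σ * (swap d d' * G.α * swap d d')) z = G.φ z := fun _ hz =>
    G.σ_mul_conj_swap_apply_of_notMem hz
  have hdd' : G.sameFace d d' := sameCycle_pow_right.2 (SameCycle.refl _ _)
  have hf₁ : ∀ l, 0 < l → l < p → l ≠ j → (G.φ ^ l) d ∉ S := by
    intro l hl hlp hlj
    have hface : G.sameFace d ((G.φ ^ l) d) := sameCycle_pow_right.2 (SameCycle.refl _ _)
    simp only [S, Set.mem_insert_iff, Set.mem_singleton_iff, not_or]
    refine ⟨pow_apply_ne_pow_apply (m := 0) hlp (by omega) (by omega),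
      pow_apply_ne_pow_apply hlp (by omega) hlj, fun h => hsep d (h ▸ hface),
      fun h => hsep d ((h ▸ hface).trans hg.symm)⟩
  have hf₂ : ∀ z, G.sameFace (G.α (G.φ d)) z → z ∉ S := by
    intro z hz
    have hu : G.sameFace d (G.φ d) := sameCycle_apply_right.2 (SameCycle.refl _ d)
    simp only [S, Set.mem_insert_iff, Set.mem_singleton_iff, not_or]
    refine ⟨?_, ?_, ?_, ?_⟩ <;> rintro rfl
    · exact hsep _ (hz.trans hu).symm
    · exact hsep _ ((hz.trans hdd'.symm).trans hu).symm
    · exact hgh hz.symm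
    · exact hgh (hg.trans hz.symm)
  have h₁ := sameCycle_pow_apply_pow_apply_of_forall hφ'
    (x := d) hj.le fun l hl hlj => hf₁ l (by omega) (by omega) (by omega)
  have h₂ := sameCycle_pow_apply_pow_apply_of_forall hφ'
    (x := d) hk.le fun l hkl hlp => hf₁ l (by omega) hlp (by omega)
  have h₃ : (G.σ * (swap d d' * G.α * swap d d')).SameCycle (G.α (G.φ d))
      (G.α ((G.φ ^ k) d)) := by
    obtain ⟨n, hn⟩ := hh.exists_nat_pow_eq
    exact hn ▸ sameCycle_pow_apply_of_forall_lt hφ' fun l _ =>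
      hf₂ _ (sameCycle_pow_right.2 (SameCycle.refl _ _))
  rw [pow_one] at h₁
  rw [show (G.φ ^ p) d = d by rw [coe_pow]; exact iterate_minimalPeriod] at h₂
  -- `d ~ φᵏ d ~ α (φᵏ d) ~ α (φ d) ~ φ d ~ d'`, the middle step along the face of
  -- `α (φ d)`.
  refine R.trans' (hR h₂.symm) (R.trans' (orbitSetoid_apply_right _ _ _) ?_)
  rw [G.conj_swap_apply_of_notMem (hf₁ k (by omega) hk (by omega))]
  refine R.trans' (hR h₃.symm) ?_
  rw [← G.conj_swap_apply_of_notMem (pow_one G.φ ▸ hf₁ 1 one_pos (by omega) (by omega))]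
  exact R.trans' (R.symm' (orbitSetoid_apply_right _ _ _)) (hR h₁)

theorem eulerChar_le_zero_of_crossing (hconn : G.Connected)
    (hsep : ∀ d, ¬ G.sameFace d (G.α d)) {d : G.D} {j k : ℕ}
    (hj : 1 < j) (hjk : j < k) (hk : k < minimalPeriod G.φ d)
    (hg : G.sameFace (G.α d) (G.α ((G.φ ^ j) d)))
    (hh : G.sameFace (G.α (G.φ d)) (G.α ((G.φ ^ k) d)))
    (hgh : ¬ G.sameFace (G.α d) (G.α (G.φ d))) : G.eulerChar ≤ 0 := by
  set d' := (G.φ ^ j) d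
  -- `α'` reattaches the edges at `d` and `d'` to each other's far ends.
  set α' := swap d d' * G.α * swap d d'
  have hdd' : d ≠ d' := by
    have := pow_apply_ne_pow_apply (π := G.φ) (x := d) (l := 0) (m := j) (by omega) (by omega)
      (by omega)
    simpa using this
  have hE : G.nE ≤ α'.cycleCount := by
    rw [show α' = swap d d' * G.α * (swap d d')⁻¹ by rw [swap_inv], cycleCount_conj]
    exact G.nE_le_cycleCount_α
  have hF : G.nF + 2 ≤ (G.σ * α').cycleCount := by
    rw [σ_mul_conj_swap]
    exact cycleCount_add_two_le_mul_swap_mul_swap (G.α.injective.ne hdd') hdd' hg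
      (sameCycle_pow_right.2 (SameCycle.refl _ _)) fun h => hsep d h.symm
  have hO : orbitCount G.σ α' ≤ 1 :=
    (Setoid.card_quotient_le_of_le (orbitSetoid_le_conj_swap
      (G.orbitSetoid_rel_of_crossing hsep hj hjk hk hg hh hgh))).trans (G.orbitCount_le_one hconn)
  have hEuler := cycleCount_add_cycleCount_add_cycleCount_mul_le G.σ α'
  have hD := G.card_le_two_mul_nE
  have hV : G.nV = G.σ.cycleCount := rfl
  simp only [eulerChar]
  omega

end Ribbon

/-- In a connected planar trivalent fat graph in which every edge
separates two distinct faces, for every face `f₁` there exists a face `f₂` sharing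
exactly one edge with `f₁`. -/
theorem planar_exists_face_sharing_exactly_one_edge (G : Ribbon)
    (htri : G.Trivalent) (hconn : G.Connected) (hplanar : G.Planar)
    (hsep : ∀ d : G.D, ¬ G.sameFace d (G.α d)) (f₁ : G.Face) :
    ∃ f₂ : G.Face, f₂ ≠ f₁ ∧
      ∃! e : Quotient G.eSetoid, ∃ d : G.D,
        Quotient.mk G.eSetoid d = e ∧ G.borders d f₁ ∧ G.borders d f₂ := by
  by_cases H : ∃ x, G.faceOf x = f₁ ∧
      ∀ y, G.faceOf y = f₁ → G.faceOf (G.α y) = G.faceOf (G.α x) → y = x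
  · obtain ⟨x, rfl, hx⟩ := H
    exact ⟨_, G.faceOf_α_ne hsep x, G.existsUnique_sharedEdge hsep hx⟩
  · push Not at H
    obtain ⟨d, j, k, hj, hjk, hk, hg, hh⟩ := G.exists_crossing htri hsep H
    have h₀ := G.eulerChar_le_zero_of_crossing hconn hsep hj hjk hk hg hh
      (G.not_sameFace_α_α_φ htri hsep d)
    have h₂ : G.eulerChar = 2 := hplanar
    omega
end

section
/- In a type 1 3D graph, let t be a set of edges of a bubble b (a 2D connected component) forming a tree, and let T be the set of 3D ancestor edges of t. Then T contains no cycle in the 3D graph G, i.e. T is a forest (a set of tree edges) in G. -/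
/-!
An injective map of multigraphs that sends the endpoints of each edge to the endpoints of
its image edge preserves, for every finite set of edges, both the number of edges and the
number of vertices they span. The counting characterisation of forests therefore transfers
from the bubble to the ancestor edges in the 3D graph.
-/

/-- A finite edge set `S` of a multigraph with endpoint maps `s`, `t` is a forest
(contains no cycle) iff every nonempty subset spans strictly more vertices than it has
edges. -/
def IsForest {V E : Type*} [DecidableEq V] (s t : E → V) (S : Finset E) : Prop :=
  ∀ T ⊆ S, T.Nonempty → T.card < (T.biUnion fun e => {s e, t e}).card

open Finset Function

theorem Finset.pair_eq_image_pair_of_or {V W : Type*} [DecidableEq V] [DecidableEq W]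
    {f : V → W} {a b : V} {x y : W} (h : (x = f a ∧ y = f b) ∨ (x = f b ∧ y = f a)) :
    ({x, y} : Finset W) = ({a, b} : Finset V).image f := by
  rcases h with ⟨rfl, rfl⟩ | ⟨rfl, rfl⟩ <;> simp [pair_comm]

theorem IsForest.image {V W E F : Type*} [DecidableEq V] [DecidableEq W] [DecidableEq F]
    {s t : E → V} {s' t' : F → W} {f : V → W} {g : E → F}
    (hf : Injective f) (hg : Injective g)
    (hends : ∀ e, ({s' (g e), t' (g e)} : Finset W) = ({s e, t e} : Finset V).image f)
    {S : Finset E} (hS : IsForest s t S) : IsForest s' t' (S.image g) := by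
  intro T hT hTne
  obtain ⟨U, hUS, rfl⟩ := subset_image_iff.mp hT
  have hspan : ((U.image g).biUnion fun e => {s' e, t' e})
      = (U.biUnion fun e => {s e, t e}).image f := by
    simp only [biUnion_image, hends, image_biUnion]
  rw [hspan, card_image_of_injective _ hf, card_image_of_injective _ hg]
  exact hS U hUS (image_nonempty.mp hTne)

theorem type1_tree_lifts_to_forest_general
    {V2 E2 V3 E3 : Type*} [DecidableEq V2] [DecidableEq V3]
    [DecidableEq E3]
    (s2 t2 : E2 → V2) (s3 t3 : E3 → V3)
    (aV : V2 → V3) (aE : E2 → E3)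
    (haV : Function.Injective aV) (haE : Function.Injective aE)
    (hcomp : ∀ l : E2,
      (s3 (aE l) = aV (s2 l) ∧ t3 (aE l) = aV (t2 l)) ∨
      (s3 (aE l) = aV (t2 l) ∧ t3 (aE l) = aV (s2 l)))
    (tr : Finset E2) (htr : IsForest s2 t2 tr) :
    IsForest s3 t3 (tr.image aE) :=
  htr.image haV haE fun l => pair_eq_image_pair_of_or (hcomp l)

/-- In a type 1 3D graph, let `t2` be a set of edges of a bubble `b`
(a connected component of the 2D projection, a multigraph with vertex set `V2`, edge set
`E2` and endpoint maps `s2`, `t2`) forming a tree (a forest), and let `T = aE '' t` be the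
set of 3D ancestor edges.  The type 1 condition guarantees that the ancestor maps
`aV : V2 → V3` and `aE : E2 → E3` are injective (each 3D vertex/edge of the ancestor
graph has a unique 2D descendent in `b`) and compatible with endpoints.  Then `T`
contains no cycle in the 3D graph: it is a forest of 3D tree edges. -/
theorem type1_tree_lifts_to_forest
    {V2 E2 V3 E3 : Type*} [DecidableEq V2] [DecidableEq E2] [DecidableEq V3]
    [DecidableEq E3]
    (s2 t2 : E2 → V2) (s3 t3 : E3 → V3)
    (aV : V2 → V3) (aE : E2 → E3)
    (haV : Function.Injective aV) (haE : Function.Injective aE)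
    (hcomp : ∀ l : E2,
      (s3 (aE l) = aV (s2 l) ∧ t3 (aE l) = aV (t2 l)) ∨
      (s3 (aE l) = aV (t2 l) ∧ t3 (aE l) = aV (s2 l)))
    (tr : Finset E2) (htr : IsForest s2 t2 tr) :
    IsForest s3 t3 (tr.image aE) :=
  type1_tree_lifts_to_forest_general s2 t2 s3 t3 aV aE haV haE hcomp tr htr
end
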